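/- A value Φ on TU games satisfies efficiency, symmetry, and n-CSE (coalitional strategic equivalence with respect to nullifying players) if and only if Φ is the Equal Division rule. -/

import Mathlib

/-!
Removing a single proper coalition `S` from the support of a game does not change the payoff of a
player `j ∉ S`, since `j` is nullifying in the game concentrated on `S`. By induction on the number
of proper coalitions with nonzero worth, every player lying outside one of them already receives
`v(N) / n`. The remaining players lie in every such coalition, so they are symmetric in `v`;
efficiency then forces their common payoff to be `v(N) / n` as well.
-/

open Finset

namespace TUGame

variable {ι : Type*} [Fintype ι] [DecidableEq ι]

def IsEfficient (Φ : (Finset ι → ℝ) → ι → ℝ) : Prop :=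
  ∀ v : Finset ι → ℝ, v ∅ = 0 → ∑ i, Φ v i = v univ

def IsSymmetric (Φ : (Finset ι → ℝ) → ι → ℝ) : Prop :=
  ∀ v : Finset ι → ℝ, v ∅ = 0 → ∀ i j : ι,
    (∀ S ∈ (univ \ {i, j} : Finset ι).powerset, v (insert i S) = v (insert j S)) → Φ v i = Φ v j

noncomputable def equalDivision (v : Finset ι → ℝ) (_ : ι) : ℝ :=
  v univ / Fintype.card ι

def HasNullifyingCSE (Φ : (Finset ι → ℝ) → ι → ℝ) : Prop :=
  ∀ v w : Finset ι → ℝ, v ∅ = 0 → w ∅ = 0 → ∀ i : ι,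
    (∀ S : Finset ι, i ∈ S → w S = 0) → Φ (v + w) i = Φ v i

noncomputable def properSupport (v : Finset ι → ℝ) : Finset (Finset ι) :=
  univ.filter fun S => S ≠ univ ∧ v S ≠ 0

theorem mem_properSupport {v : Finset ι → ℝ} {S : Finset ι} :
    S ∈ properSupport v ↔ S ≠ univ ∧ v S ≠ 0 := by
  simp [properSupport]

theorem properSupport_update_zero (v : Finset ι → ℝ) (S : Finset ι) :
    properSupport (Function.update v S 0) = (properSupport v).erase S := by
  ext T
  by_cases hT : T = S
  · subst hT
    simp [mem_properSupport]
  · simp [mem_properSupport, hT]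

theorem eq_zero_of_forall_mem_properSupport {v : Finset ι → ℝ} {j : ι}
    (hj : ∀ S ∈ properSupport v, j ∈ S) {T : Finset ι} (hjT : j ∉ T) : v T = 0 := by
  by_contra hvT
  exact hjT (hj T (mem_properSupport.2 ⟨fun h => hjT (h ▸ mem_univ j), hvT⟩))

omit [Fintype ι] in
theorem update_zero_apply_empty {v : Finset ι → ℝ} (hv : v ∅ = 0) (S : Finset ι) :
    Function.update v S 0 ∅ = 0 := by
  by_cases hS : (∅ : Finset ι) = S <;> simp [hS, hv]

omit [Fintype ι] in
theorem HasNullifyingCSE.apply_update_zero {Φ : (Finset ι → ℝ) → ι → ℝ} (hΦ : HasNullifyingCSE Φ)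
    {v : Finset ι → ℝ} (hv : v ∅ = 0) {S : Finset ι} {j : ι} (hjS : j ∉ S) :
    Φ (Function.update v S 0) j = Φ v j := by
  have hdecomp : Function.update v S 0 + Pi.single S (v S) = v := by
    ext T
    by_cases hT : T = S
    · subst hT
      simp
    · simp [hT]
  have hsingle : (Pi.single S (v S) : Finset ι → ℝ) ∅ = 0 := by
    by_cases hS : (∅ : Finset ι) = S
    · subst hS
      simp [hv]
    · exact Pi.single_eq_of_ne hS _
  rw [← hΦ (Function.update v S 0) (Pi.single S (v S)) (update_zero_apply_empty hv S) hsingle j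
    (fun T hjT => Pi.single_eq_of_ne (by rintro rfl; exact hjS hjT) _),
    hdecomp]

theorem IsSymmetric.apply_eq_of_forall_mem_properSupport {Φ : (Finset ι → ℝ) → ι → ℝ}
    (hΦ : IsSymmetric Φ) {v : Finset ι → ℝ} (hv : v ∅ = 0) {i j : ι}
    (hi : ∀ S ∈ properSupport v, i ∈ S) (hj : ∀ S ∈ properSupport v, j ∈ S) : Φ v i = Φ v j := by
  by_cases hij : i = j
  · rw [hij]
  refine hΦ v hv i j fun S hS => ?_
  have hS' : S ⊆ univ \ {i, j} := mem_powerset.1 hS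
  have hiS : i ∉ S := fun h => by simpa using hS' h
  have hjS : j ∉ S := fun h => by simpa using hS' h
  rw [eq_zero_of_forall_mem_properSupport hj (by simp [hjS, Ne.symm hij]),
    eq_zero_of_forall_mem_properSupport hi (by simp [hiS, hij])]

omit [DecidableEq ι] in
theorem eq_div_card_of_sum_eq {x : ι → ℝ} {t : ℝ} (A : Finset ι) {i : ι} (hi : i ∈ A)
    (hA : ∀ j ∈ A, x j = x i) (hAc : ∀ j ∉ A, x j = t / Fintype.card ι) (hsum : ∑ j, x j = t) :
    x i = t / Fintype.card ι := by
  have : Nonempty ι := ⟨i⟩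
  have hcard : (Fintype.card ι : ℝ) ≠ 0 := Nat.cast_ne_zero.2 Fintype.card_ne_zero
  set y := fun j => x j - t / Fintype.card ι
  have hy : ∑ j, y j = 0 := by
    simp only [y, sum_sub_distrib, hsum, sum_const, card_univ, nsmul_eq_mul]
    field_simp
    ring
  have hyA : ∑ j, y j = #A * y i := by
    rw [← sum_subset (subset_univ A) fun j _ hj => sub_eq_zero.2 (hAc j hj),
      sum_congr rfl fun j hj => congrArg (· - t / Fintype.card ι) (hA j hj), sum_const,
      nsmul_eq_mul]
  have hAne : (#A : ℝ) ≠ 0 := Nat.cast_ne_zero.2 (card_ne_zero_of_mem hi)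
  exact sub_eq_zero.1 ((mul_eq_zero.1 (hyA ▸ hy)).resolve_left hAne)

theorem apply_eq_equalDivision {Φ : (Finset ι → ℝ) → ι → ℝ} (hE : IsEfficient Φ)
    (hS : IsSymmetric Φ) (hC : HasNullifyingCSE Φ) (v : Finset ι → ℝ) (hv : v ∅ = 0) (i : ι) :
    Φ v i = equalDivision v i := by
  induction hk : #(properSupport v) using Nat.strong_induction_on generalizing v i with
  | _ k ih =>
  have hout : ∀ j, (¬ ∀ S ∈ properSupport v, j ∈ S) → Φ v j = equalDivision v j := by
    intro j hj
    push Not at hj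
    obtain ⟨S, hS, hjS⟩ := hj
    have hlt : #(properSupport (Function.update v S 0)) < k := by
      rw [properSupport_update_zero, ← hk]
      exact card_erase_lt_of_mem hS
    rw [← hC.apply_update_zero hv hjS, ih _ hlt _ (update_zero_apply_empty hv S) j rfl,
      equalDivision, equalDivision, Function.update_of_ne (mem_properSupport.1 hS).1.symm]
  by_cases hi : ∀ S ∈ properSupport v, i ∈ S
  · refine eq_div_card_of_sum_eq (univ.filter fun j => ∀ S ∈ properSupport v, j ∈ S)
      (by simpa using hi) (fun j hj => ?_) (fun j hj => hout j (by simpa using hj)) (hE v hv)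
    exact hS.apply_eq_of_forall_mem_properSupport hv (by simpa using hj) hi
  · exact hout i hi

omit [DecidableEq ι] in
theorem isEfficient_equalDivision : IsEfficient (equalDivision (ι := ι)) := by
  intro v hv
  simp only [equalDivision]
  rcases isEmpty_or_nonempty ι with hι | hι
  · simp [univ_eq_empty, hv]
  · rw [sum_const, card_univ, nsmul_eq_mul,
      mul_div_cancel₀ _ (Nat.cast_ne_zero.2 Fintype.card_ne_zero)]

omit [DecidableEq ι] in
theorem hasNullifyingCSE_equalDivision : HasNullifyingCSE (equalDivision (ι := ι)) := by
  intro v w _ _ i hw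
  simp [equalDivision, hw univ (mem_univ i)]

theorem characterization_equalDivision (Φ : (Finset ι → ℝ) → ι → ℝ) :
    (IsEfficient Φ ∧ IsSymmetric Φ ∧ HasNullifyingCSE Φ) ↔
      ∀ v : Finset ι → ℝ, v ∅ = 0 → ∀ i, Φ v i = equalDivision v i := by
  constructor
  · rintro ⟨hE, hS, hC⟩
    exact apply_eq_equalDivision hE hS hC
  · intro hED
    have hΦ : ∀ v : Finset ι → ℝ, v ∅ = 0 → Φ v = equalDivision v :=
      fun v hv => funext (hED v hv)
    refine ⟨fun v hv => ?_, fun v hv i j _ => by rw [hED v hv i, hED v hv j]; rfl,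
      fun v w hv hw i hi => ?_⟩
    · rw [hΦ v hv]
      exact isEfficient_equalDivision v hv
    · rw [hΦ v hv, hΦ (v + w) (by simp [hv, hw])]
      exact hasNullifyingCSE_equalDivision v w hv hw i hi

end TUGame

theorem ED_characterization_nCSE_general (n : ℕ)
    (Φ : (Finset (Fin n) → ℝ) → Fin n → ℝ) :
    ((∀ v : Finset (Fin n) → ℝ, v ∅ = 0 → ∑ i, Φ v i = v Finset.univ) ∧
     (∀ v : Finset (Fin n) → ℝ, v ∅ = 0 → ∀ i j : Fin n,
        (∀ S ∈ (Finset.univ \ {i, j} : Finset (Fin n)).powerset,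
          v (insert i S) = v (insert j S)) → Φ v i = Φ v j) ∧
     (∀ v w : Finset (Fin n) → ℝ, v ∅ = 0 → w ∅ = 0 → ∀ i : Fin n,
        (∀ S : Finset (Fin n), i ∈ S → w S = 0) →
        Φ (v + w) i = Φ v i))
    ↔ (∀ v : Finset (Fin n) → ℝ, v ∅ = 0 → ∀ i : Fin n,
        Φ v i = v Finset.univ / n) := by
  have h := TUGame.characterization_equalDivision Φ
  simp only [TUGame.equalDivision, Fintype.card_fin] at h
  exact h

/-- a value satisfies efficiency, symmetry and `n`-CSE (coalitional
strategic equivalence w.r.t. nullifying players) iff it is the Equal Division rule. -/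
theorem ED_characterization_nCSE (n : ℕ) (hn : 1 ≤ n)
    (Φ : (Finset (Fin n) → ℝ) → Fin n → ℝ) :
    ((∀ v : Finset (Fin n) → ℝ, v ∅ = 0 → ∑ i, Φ v i = v Finset.univ) ∧
     (∀ v : Finset (Fin n) → ℝ, v ∅ = 0 → ∀ i j : Fin n,
        (∀ S ∈ (Finset.univ \ {i, j} : Finset (Fin n)).powerset,
          v (insert i S) = v (insert j S)) → Φ v i = Φ v j) ∧
     (∀ v w : Finset (Fin n) → ℝ, v ∅ = 0 → w ∅ = 0 → ∀ i : Fin n,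
        (∀ S : Finset (Fin n), i ∈ S → w S = 0) →
        Φ (v + w) i = Φ v i))
    ↔ (∀ v : Finset (Fin n) → ℝ, v ∅ = 0 → ∀ i : Fin n,
        Φ v i = v Finset.univ / n) :=
  ED_characterization_nCSE_general n Φ
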